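/- Let m > 0 be a real number and let N ≥ 2 and 1 ≤ j ≤ N−1 be integers. Then Σ_{i=0}^{N−1−j} (−1)^i · binom(i+N+j−1+m, N−j) · binom(m+2j+i−1, i) / ((i+j+m) · (N−i−j−1)! · ∏_{k=0}^{i}(m+2j+i−k)) = binom(N−1, j−1) · Γ(j+m)/(j · Γ(N+m)). -/

import Mathlib

/-!
Put `N = j + 1 + n` and write every generalized binomial coefficient as a rising factorial
`(x)ₖ = x (x + 1) ⋯ (x + k - 1)`. The `i`-th summand becomes
`(-1)^i C(n, i) P(i) / (i + x) / (n! (n + 1)!)` with `x = j + m` and `P(y) = (y + m + 2j + 1)ₙ`,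
a polynomial of degree `n`. Dividing `P` by `y + x` leaves the remainder `P(-x) = (j + 1)ₙ` and
a quotient of degree `< n`, whose `n`-th finite difference vanishes. What is left is `P(-x)` times
the `n`-th finite difference of `y ↦ 1/(y + x)`, namely `n! / (x)ₙ₊₁`, and
`Γ(N + m) = Γ(j + m) (j + m)ₙ₊₁`.
-/

/-- Generalized binomial coefficient `binom(x, r) = x(x-1)⋯(x-r+1)/r!` for a real
number `x` and a natural number `r`. -/
noncomputable def rbinom (x : ℝ) (r : ℕ) : ℝ :=
  (∏ i ∈ Finset.range r, (x - i)) / (Nat.factorial r)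

open Finset Polynomial fwdDiff Nat

theorem sum_range_alternating_choose_mul_eq_fwdDiff_iter {R : Type*} [CommRing R]
    (f : R → R) (n : ℕ) :
    ∑ i ∈ range (n + 1), (-1 : R) ^ i * n.choose i * f i = (-1) ^ n * (Δ_[1])^[n] f 0 := by
  rw [fwdDiff_iter_eq_sum_shift, mul_sum]
  refine sum_congr rfl fun i hi => ?_
  have hsign : (-1 : R) ^ n = (-1) ^ (n - i) * (-1) ^ i := by
    rw [← pow_add, Nat.sub_add_cancel (Nat.lt_succ_iff.mp (mem_range.mp hi))]
  rw [hsign, zsmul_eq_mul]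
  push_cast
  simp only [zero_add, nsmul_eq_mul, mul_one]
  have hsq : (-1 : R) ^ (n - i) * (-1) ^ (n - i) = 1 := by rw [← mul_pow]; simp
  linear_combination -(-1 : R) ^ i * n.choose i * f i * hsq

theorem Polynomial.sum_range_alternating_choose_mul_eval_eq_zero {R : Type*} [CommRing R]
    {Q : R[X]} {n : ℕ} (hQ : Q.degree < n) :
    ∑ i ∈ range (n + 1), (-1 : R) ^ i * n.choose i * Q.eval (i : R) = 0 := by
  rcases eq_or_ne Q 0 with rfl | hQ0
  · simp
  rw [sum_range_alternating_choose_mul_eq_fwdDiff_iter (fun z => Q.eval z),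
    fwdDiff_iter_eq_zero_of_degree_lt ((natDegree_lt_iff_degree_lt hQ0).mpr hQ)]
  simp

section Field

variable {𝕜 : Type*} [Field 𝕜]

theorem ascPochhammer_eval_ne_zero {x : 𝕜} (hx : ∀ k : ℕ, x + k ≠ 0) (n : ℕ) :
    (ascPochhammer 𝕜 n).eval x ≠ 0 := by
  rw [Ne, ascPochhammer_eval_eq_zero_iff]
  rintro ⟨k, -, hk⟩
  exact hx k (by rw [hk]; ring)

theorem fwdDiff_iter_inv {x : 𝕜} (hx : ∀ k : ℕ, x + k ≠ 0) (n : ℕ) :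
    (Δ_[1])^[n] (·⁻¹) x = (-1) ^ n * n ! / (ascPochhammer 𝕜 (n + 1)).eval x := by
  induction n generalizing x with
  | zero => simp
  | succ n ih =>
    have hx1 : ∀ k : ℕ, x + 1 + k ≠ 0 := fun k => by
      convert hx (k + 1) using 1; push_cast; ring
    have hA := ascPochhammer_eval_ne_zero hx (n + 1)
    have hA1 := ascPochhammer_eval_ne_zero hx1 (n + 1)
    have hx0 : x ≠ 0 := by simpa using hx 0
    have hstep :
        (ascPochhammer 𝕜 (n + 2)).eval x = x * (ascPochhammer 𝕜 (n + 1)).eval (x + 1) := by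
      rw [ascPochhammer_succ_left]; simp
    rw [Function.iterate_succ_apply', fwdDiff, ih hx, ih hx1, hstep, Nat.factorial_succ]
    rw [ascPochhammer_succ_eval] at hstep
    push_cast at hstep ⊢
    field_simp
    linear_combination (n ! : 𝕜) * (-1) ^ n * hstep

theorem sum_range_alternating_choose_div_add {x : 𝕜} (hx : ∀ k : ℕ, x + k ≠ 0) (n : ℕ) :
    ∑ i ∈ range (n + 1), (-1 : 𝕜) ^ i * n.choose i / (i + x)
      = n ! / (ascPochhammer 𝕜 (n + 1)).eval x := by
  have h := sum_range_alternating_choose_mul_eq_fwdDiff_iter (fun z => (z + x)⁻¹) n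
  rw [fwdDiff_iter_comp_add, zero_add, fwdDiff_iter_inv hx, ← mul_div_assoc, ← mul_assoc,
    ← mul_pow] at h
  simpa [div_eq_mul_inv] using h

theorem Polynomial.sum_range_alternating_choose_mul_eval_div (P : 𝕜[X]) {n : ℕ}
    (hP : P.natDegree ≤ n) {x : 𝕜} (hx : ∀ k : ℕ, x + k ≠ 0) :
    ∑ i ∈ range (n + 1), (-1 : 𝕜) ^ i * n.choose i * P.eval (i : 𝕜) / (i + x)
      = P.eval (-x) * n ! / (ascPochhammer 𝕜 (n + 1)).eval x := by
  set Q := P /ₘ (X - C (-x))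
  have hdecomp : ∀ z, P.eval z = (z + x) * Q.eval z + P.eval (-x) := fun z => by
    conv_lhs => rw [← modByMonic_add_div P (X - C (-x)), modByMonic_X_sub_C_eq_C_eval]
    simp only [eval_add, eval_C, eval_mul, eval_sub, eval_X]
    ring
  have hQ : Q.degree < n := by
    rcases eq_or_ne P 0 with rfl | hP0
    · simp [Q]
    exact (degree_divByMonic_lt P _ hP0 (by simp)).trans_le
      (degree_le_of_natDegree_le hP)
  calc ∑ i ∈ range (n + 1), (-1 : 𝕜) ^ i * n.choose i * P.eval (i : 𝕜) / (i + x)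
      = ∑ i ∈ range (n + 1), (-1 : 𝕜) ^ i * n.choose i * Q.eval (i : 𝕜)
          + P.eval (-x) * ∑ i ∈ range (n + 1), (-1 : 𝕜) ^ i * n.choose i / (i + x) := by
        rw [mul_sum, ← sum_add_distrib]
        refine sum_congr rfl fun i _ => ?_
        have hix : (i : 𝕜) + x ≠ 0 := by rw [add_comm]; exact hx i
        rw [hdecomp]
        field_simp
    _ = P.eval (-x) * n ! / (ascPochhammer 𝕜 (n + 1)).eval x := by
        rw [sum_range_alternating_choose_mul_eval_eq_zero hQ,
          sum_range_alternating_choose_div_add hx]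
        ring

end Field

theorem rbinom_eq_ascPochhammer (x : ℝ) (r : ℕ) :
    rbinom x r = (ascPochhammer ℝ r).eval (x - r + 1) / r ! := by
  rw [rbinom, ← descPochhammer_eval_eq_prod_range, descPochhammer_eval_eq_ascPochhammer]

theorem Real.Gamma_add_nat_eq_mul_ascPochhammer {x : ℝ} (hx : ∀ k : ℕ, x + k ≠ 0)
    (n : ℕ) :
    Real.Gamma (x + n) = Real.Gamma x * (ascPochhammer ℝ n).eval x := by
  induction n with
  | zero => simp
  | succ n ih =>
    rw [Nat.cast_succ, ← add_assoc, Real.Gamma_add_one (hx n), ih, ascPochhammer_succ_eval]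
    ring

theorem summand_eq_choose_mul_ascPochhammer {m : ℝ} (hm : 0 < m) (j n : ℕ) {i : ℕ}
    (hi : i ≤ n) :
    (-1 : ℝ) ^ i * rbinom ((i : ℝ) + (j + 1 + n : ℕ) + j - 1 + m) (j + 1 + n - j) *
          rbinom (m + 2 * j + i - 1) i /
            (((i : ℝ) + j + m) * (Nat.factorial (j + 1 + n - i - j - 1) : ℝ) *
              ∏ k ∈ Finset.range (i + 1), (m + 2 * j + i - k))
      = (-1) ^ i * n.choose i * (ascPochhammer ℝ n).eval (i + (m + 2 * j + 1)) / (i + (j + m))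
          / (n ! * (n + 1)!) := by
  rw [show j + 1 + n - j = n + 1 by omega, show j + 1 + n - i - j - 1 = n - i by omega,
    rbinom_eq_ascPochhammer, rbinom_eq_ascPochhammer, ← descPochhammer_eval_eq_prod_range,
    descPochhammer_eval_eq_ascPochhammer]
  set b : ℝ := m + 2 * j
  have hb : 0 < b := by positivity
  rw [show (i : ℝ) + ((j + 1 + n : ℕ) : ℝ) + j - 1 + m - ((n + 1 : ℕ) : ℝ) + 1 = i + b by
      push_cast; ring,
    show b + i - 1 - i + 1 = b by ring,
    show b + i - ((i + 1 : ℕ) : ℝ) + 1 = b by push_cast; ring,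
    ascPochhammer_succ_eval i b, ascPochhammer_succ_left (S := ℝ) n]
  have hA := (ascPochhammer_pos i b hb).ne'
  have hchoose : (n.choose i : ℝ) * i ! * (n - i)! = n ! := by
    exact_mod_cast Nat.choose_mul_factorial_mul_factorial hi
  have hC : (n.choose i : ℝ) ≠ 0 := by exact_mod_cast (Nat.choose_pos hi).ne'
  simp only [eval_mul, eval_X, eval_comp, eval_add, eval_one]
  rw [← hchoose, add_assoc (i : ℝ) b 1]
  field_simp
  ring

theorem Nat.mul_succ_ascFactorial_eq_choose_mul_factorial {j : ℕ} (hj : 1 ≤ j) (n : ℕ) :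
    j * (j + 1).ascFactorial n = (j + n).choose (j - 1) * (n + 1)! := by
  obtain ⟨k, rfl⟩ : ∃ k, j = k + 1 := ⟨j - 1, by omega⟩
  apply Nat.eq_of_mul_eq_mul_left (factorial_pos k)
  have hchoose := Nat.choose_mul_factorial_mul_factorial (show k ≤ k + 1 + n by omega)
  rw [show k + 1 + n - k = n + 1 by omega] at hchoose
  rw [add_tsub_cancel_right, ← mul_assoc, mul_comm k !, ← factorial_succ,
    factorial_mul_ascFactorial, ← hchoose]
  ring

theorem statement16_general (m : ℝ) (hm : 0 < m) (N j : ℕ) (hj1 : 1 ≤ j)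
    (hj2 : j ≤ N - 1) :
    ∑ i ∈ Finset.Icc 0 (N - 1 - j),
        (-1 : ℝ) ^ i * rbinom ((i : ℝ) + N + j - 1 + m) (N - j) *
          rbinom (m + 2 * j + i - 1) i /
            (((i : ℝ) + j + m) * (Nat.factorial (N - i - j - 1) : ℝ) *
              ∏ k ∈ Finset.range (i + 1), (m + 2 * j + i - k))
      = (Nat.choose (N - 1) (j - 1) : ℝ) * Real.Gamma ((j : ℝ) + m) /
          ((j : ℝ) * Real.Gamma ((N : ℝ) + m)) := by
  obtain ⟨n, rfl⟩ : ∃ n, N = j + 1 + n := ⟨N - j - 1, by omega⟩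
  rw [show j + 1 + n - 1 - j = n by omega, ← range_succ_eq_Icc_zero,
    sum_congr rfl fun i hi => summand_eq_choose_mul_ascPochhammer hm j n (mem_range_succ_iff.mp hi),
    ← sum_div]
  have hx : ∀ k : ℕ, (j + m : ℝ) + k ≠ 0 := fun k => by positivity
  have hkey := sum_range_alternating_choose_mul_eval_div
    ((ascPochhammer ℝ n).comp (X + C (m + 2 * j + 1))) (n := n)
    (by rw [natDegree_comp, natDegree_X_add_C, ascPochhammer_natDegree, mul_one]) hx
  simp only [eval_comp, eval_add, eval_X, eval_C] at hkey
  rw [hkey, show -(j + m) + (m + 2 * j + 1) = ((j + 1 : ℕ) : ℝ) by push_cast; ring,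
    ascPochhammer_nat_eq_natCast_ascFactorial, show j + 1 + n - 1 = j + n by omega,
    show ((j + 1 + n : ℕ) : ℝ) + m = (j + m) + (n + 1 : ℕ) by push_cast; ring,
    Real.Gamma_add_nat_eq_mul_ascPochhammer hx]
  have hnat : (j : ℝ) * (j + 1).ascFactorial n = (j + n).choose (j - 1) * (n + 1)! := by
    exact_mod_cast Nat.mul_succ_ascFactorial_eq_choose_mul_factorial hj1 n
  have hΓ := (Real.Gamma_pos_of_pos (show (0 : ℝ) < j + m by positivity)).ne'
  have hA := (ascPochhammer_pos (n + 1) (j + m : ℝ) (by positivity)).ne'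
  have hj : (j : ℝ) ≠ 0 := by positivity
  field_simp
  linear_combination hnat

/-- Let `m > 0` be a real number and let `N ≥ 2` and `1 ≤ j ≤ N−1` be integers.
Then `Σ_{i=0}^{N−1−j} (−1)^i · binom(i+N+j−1+m, N−j) · binom(m+2j+i−1, i) /
  ((i+j+m) · (N−i−j−1)! · ∏_{k=0}^{i}(m+2j+i−k))
  = binom(N−1, j−1) · Γ(j+m)/(j · Γ(N+m))`. -/
theorem statement16 (m : ℝ) (hm : 0 < m) (N j : ℕ) (hN : 2 ≤ N) (hj1 : 1 ≤ j)
    (hj2 : j ≤ N - 1) :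
    ∑ i ∈ Finset.Icc 0 (N - 1 - j),
        (-1 : ℝ) ^ i * rbinom ((i : ℝ) + N + j - 1 + m) (N - j) *
          rbinom (m + 2 * j + i - 1) i /
            (((i : ℝ) + j + m) * (Nat.factorial (N - i - j - 1) : ℝ) *
              ∏ k ∈ Finset.range (i + 1), (m + 2 * j + i - k))
      = (Nat.choose (N - 1) (j - 1) : ℝ) * Real.Gamma ((j : ℝ) + m) /
          ((j : ℝ) * Real.Gamma ((N : ℝ) + m)) :=
  statement16_general m hm N j hj1 hj2
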